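/- arXiv:1407.5968 — 2 statements merged into one kernel-verified Lean document; each statement's English description precedes it below -/
import Mathlib

section
/- Conversely, let f : S(H) → [0,∞] be a frame function on a Hilbert space H. Then the map m(M) := W_M (the weight of f on M) is a completely additive measure on L(H): m({0}) = 0 and m(⋁ᵢ Mᵢ) = ∑ᵢ m(Mᵢ) for any family of pairwise orthogonal closed subspaces Mᵢ. -/
open scoped InnerProductSpace ENNReal

/-- An orthonormal family whose closed span is the closed subspace `M`,
i.e. an orthonormal basis of `M`. -/
def IsONBasisOf {H : Type} [NormedAddCommGroup H] [InnerProductSpace ℂ H]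
    {ι : Type} (x : ι → H) (M : Submodule ℂ H) : Prop :=
  Orthonormal ℂ x ∧ (Submodule.span ℂ (Set.range x)).topologicalClosure = M

/-!
Choose an orthonormal basis of each closed subspace `Mᵢ` (a Hilbert basis of the complete space
`Mᵢ`). Since the `Mᵢ` are mutually orthogonal, the concatenated family is an orthonormal basis of
the closed span of `⋃ᵢ Mᵢ`, so the weight of that closed span is a double sum of values of `f`,
which regroups as `∑ᵢ m Mᵢ` because sums in `[0, ∞]` are unconditional. The empty family is an
orthonormal basis of `{0}`, whose weight is therefore the empty sum.
-/

theorem Orthonormal.sigma {𝕜 E : Type*} [RCLike 𝕜] [NormedAddCommGroup E] [InnerProductSpace 𝕜 E]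
    {ι : Type*} {κ : ι → Type*} {x : ∀ i, κ i → E} (hx : ∀ i, Orthonormal 𝕜 (x i))
    (hortho : ∀ i j, i ≠ j → ∀ a b, ⟪x i a, x j b⟫_𝕜 = 0) :
    Orthonormal 𝕜 (fun p : Σ i, κ i => x p.1 p.2) := by
  classical
  rw [orthonormal_iff_ite]
  rintro ⟨i, a⟩ ⟨j, b⟩
  by_cases hij : i = j
  · subst hij
    simp [orthonormal_iff_ite.mp (hx i) a b]
  · simp [hortho i j hij a b, hij]

theorem Submodule.topologicalClosure_iSup_topologicalClosure {R M : Type*} [Semiring R]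
    [TopologicalSpace M] [AddCommMonoid M] [Module R M] [ContinuousAdd M] [ContinuousConstSMul R M]
    {ι : Sort*} (N : ι → Submodule R M) :
    (⨆ i, (N i).topologicalClosure).topologicalClosure = (⨆ i, N i).topologicalClosure := by
  refine le_antisymm ?_ (topologicalClosure_mono (iSup_mono fun i => le_topologicalClosure _))
  refine topologicalClosure_minimal _ (iSup_le fun i => ?_) (isClosed_topologicalClosure _)
  exact topologicalClosure_mono (le_iSup N i)

section

variable {H : Type} [NormedAddCommGroup H] [InnerProductSpace ℂ H]

theorem isONBasisOf_empty : IsONBasisOf (Empty.elim : Empty → H) ⊥ :=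
  ⟨.of_isEmpty _, by
    rw [Set.range_eq_empty, Submodule.span_empty]
    exact IsClosed.submodule_topologicalClosure_eq (by simp)⟩

theorem IsClosed.exists_isONBasisOf [CompleteSpace H] {M : Submodule ℂ H}
    (hM : IsClosed (M : Set H)) : ∃ (ι : Type) (x : ι → H), IsONBasisOf x M := by
  have := hM.completeSpace_coe
  obtain ⟨w, b, -⟩ := exists_hilbertBasis ℂ M
  refine ⟨w, fun i => (b i : H), b.orthonormal.comp_linearIsometry M.subtypeₗᵢ, ?_⟩
  have hspan : Submodule.span ℂ (Set.range fun i => (b i : H))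
      = (Submodule.span ℂ (Set.range b)).map M.subtype := by
    rw [Submodule.map_span, ← Set.range_comp]; rfl
  rw [hspan]
  refine le_antisymm (Submodule.topologicalClosure_minimal _ (Submodule.map_subtype_le _ _) hM)
    fun y hy => ?_
  have hdense : Dense (Submodule.span ℂ (Set.range b) : Set M) :=
    Submodule.dense_iff_topologicalClosure_eq_top.mpr b.dense_span
  exact Subtype.dense_iff.mp hdense hy

theorem IsONBasisOf.sigma {ι : Type} {κ : ι → Type} {x : ∀ i, κ i → H}
    {M : ι → Submodule ℂ H} (hx : ∀ i, IsONBasisOf (x i) (M i))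
    (hM : ∀ i j, i ≠ j → ∀ u ∈ M i, ∀ v ∈ M j, ⟪u, v⟫_ℂ = 0) :
    IsONBasisOf (fun p : Σ i, κ i => x p.1 p.2) (⨆ i, M i).topologicalClosure := by
  have mem (i : ι) (a : κ i) : x i a ∈ M i :=
    (hx i).2 ▸ Submodule.le_topologicalClosure _ (Submodule.subset_span ⟨a, rfl⟩)
  refine ⟨.sigma (fun i => (hx i).1) fun i j hij a b => hM i j hij _ (mem i a) _ (mem j b), ?_⟩
  rw [Set.range_sigma_eq_iUnion_range, Submodule.span_iUnion,
    ← Submodule.topologicalClosure_iSup_topologicalClosure]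
  simp only [(hx _).2]

end

/-- If `f : S(H) → [0,∞]` is a frame function with weight `m M` on each closed
subspace `M` (i.e. `∑ᵢ f xᵢ = m M` for each orthonormal basis `{xᵢ}` of `M`), then
`m` is a completely additive measure on `L(H)`: `m ⊥ = 0` and
`m (⋁ᵢ Mᵢ) = ∑ᵢ m Mᵢ` for pairwise orthogonal closed subspaces `Mᵢ`. -/
theorem frame_function_gives_completely_additive_measure {H : Type}
    [NormedAddCommGroup H] [InnerProductSpace ℂ H] [CompleteSpace H]
    (f : H → ℝ≥0∞) (m : Submodule ℂ H → ℝ≥0∞)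
    (hfm : ∀ M : Submodule ℂ H, IsClosed ((M : Set H)) →
      ∀ (ι : Type) (x : ι → H), IsONBasisOf x M → ∑' i, f (x i) = m M) :
    m ⊥ = 0 ∧
      ∀ (ι : Type) (M : ι → Submodule ℂ H),
        (∀ i, IsClosed ((M i : Set H))) →
        (∀ i j, i ≠ j → ∀ u ∈ M i, ∀ v ∈ M j, ⟪u, v⟫_ℂ = 0) →
        m ((⨆ i, M i).topologicalClosure) = ∑' i, m (M i) := by
  refine ⟨?_, fun ι M hMc hMo => ?_⟩
  · rw [← hfm ⊥ (by simp) Empty _ isONBasisOf_empty, tsum_empty]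
  · choose κ x hx using fun i => (hMc i).exists_isONBasisOf
    rw [← hfm _ (Submodule.isClosed_topologicalClosure _) _ _ (IsONBasisOf.sigma hx hMo),
      ENNReal.tsum_sigma']
    exact tsum_congr fun i => hfm (M i) (hMc i) _ _ (hx i)
end

section
/- Let H be a finite-dimensional complex Hilbert space and f : S(H) → ℝ a frame function that is semibounded, i.e., K := inf{f(x) : x ∈ S(H)} > −∞. Then f is bounded: sup{|f(x)| : x ∈ S(H)} < ∞. In fact |f(y)| ≤ |W_H| + (n−1)|K| for every unit vector y, where n = dim H and W_H is the weight of f on H. -/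
/-!
Extend the unit vector `y` to an orthonormal basis. The other `n - 1` basis vectors each
carry weight at least `K`, so `f y ≤ W - (n - 1) K`. From below, `f y ≥ K` when `n ≥ 2`,
while for `n = 1` the basis is `{y}` alone and `f y = W`.
-/

open Finset

theorem le_sub_card_mul_of_sum_eq {ι : Type*} [Fintype ι] [DecidableEq ι] {g : ι → ℝ} {W K : ℝ}
    (hsum : ∑ i, g i = W) (hK : ∀ i, K ≤ g i) (i₀ : ι) :
    g i₀ ≤ W - (Fintype.card ι - 1 : ℝ) * K := by
  have hrest : (Fintype.card ι - 1 : ℝ) * K ≤ ∑ i ∈ univ.erase i₀, g i := by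
    rw [← card_univ, ← cast_card_erase_of_mem (mem_univ i₀), ← nsmul_eq_mul]
    exact card_nsmul_le_sum _ _ _ fun i _ => hK i
  linarith [add_sum_erase univ g (mem_univ i₀)]

theorem abs_le_of_sum_eq_of_forall_le {ι : Type*} [Fintype ι] {g : ι → ℝ} {W K : ℝ}
    (hsum : ∑ i, g i = W) (hK : ∀ i, K ≤ g i) (i₀ : ι) :
    |g i₀| ≤ |W| + (Fintype.card ι - 1 : ℝ) * |K| := by
  classical
  have hcard : (1 : ℝ) ≤ Fintype.card ι := by exact_mod_cast Fintype.card_pos_iff.mpr ⟨i₀⟩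
  have hupper := le_sub_card_mul_of_sum_eq hsum hK i₀
  have hK_abs : -((Fintype.card ι - 1 : ℝ) * K) ≤ (Fintype.card ι - 1 : ℝ) * |K| := by
    rw [← mul_neg]; exact mul_le_mul_of_nonneg_left (neg_le_abs K) (by linarith)
  refine abs_le.mpr ⟨?_, by linarith [le_abs_self W]⟩
  rcases subsingleton_or_nontrivial ι with hι | hι
  · have : g i₀ = W := by rw [← hsum, Fintype.sum_subsingleton g i₀]
    nlinarith [neg_abs_le W, abs_nonneg K]
  · have : (2 : ℝ) ≤ Fintype.card ι := by exact_mod_cast Fintype.one_lt_card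
    nlinarith [hK i₀, neg_abs_le K, abs_nonneg K, abs_nonneg W]

theorem OrthonormalBasis.exists_apply_eq {𝕜 E ι : Type*} [RCLike 𝕜] [NormedAddCommGroup E]
    [InnerProductSpace 𝕜 E] [FiniteDimensional 𝕜 E] [Fintype ι]
    (card_ι : Module.finrank 𝕜 E = Fintype.card ι)
    (i₀ : ι) {y : E} (hy : ‖y‖ = 1) : ∃ b : OrthonormalBasis ι 𝕜 E, b i₀ = y := by
  have hy_on : Orthonormal 𝕜 (({i₀} : Set ι).domRestrict fun _ => y) :=
    ⟨fun _ => hy, fun i j hij => absurd (Subtype.ext (i.2.trans j.2.symm)) hij⟩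
  obtain ⟨b, hb⟩ := hy_on.exists_orthonormalBasis_extension_of_card_eq card_ι
  exact ⟨b, hb i₀ rfl⟩

/-- A semibounded frame function on a finite-dimensional complex Hilbert space is
bounded: if `K ≤ f x` for all unit `x` and every orthonormal basis sums to `W`,
then `|f y| ≤ |W| + (n-1)|K|` for every unit vector `y`, where `n = dim H`. -/
theorem semibounded_frame_function_bounded {H : Type} [NormedAddCommGroup H]
    [InnerProductSpace ℂ H] [FiniteDimensional ℂ H] (f : H → ℝ) (W K : ℝ)
    (hW : ∀ b : OrthonormalBasis (Fin (Module.finrank ℂ H)) ℂ H,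
      ∑ i, f (b i) = W)
    (hK : ∀ x : H, ‖x‖ = 1 → K ≤ f x) :
    ∀ y : H, ‖y‖ = 1 → |f y| ≤ |W| + (Module.finrank ℂ H - 1 : ℝ) * |K| := by
  intro y hy
  have : Nontrivial H := nontrivial_of_ne y 0 (by rintro rfl; simp at hy)
  obtain ⟨b, rfl⟩ := OrthonormalBasis.exists_apply_eq (Fintype.card_fin _).symm
    ⟨0, Module.finrank_pos (R := ℂ)⟩ hy
  simpa using abs_le_of_sum_eq_of_forall_le (hW b) (fun i => hK (b i) (b.norm_eq_one i)) _
end
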